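/- Let k ≥ 2, let s, μ ∈ ℂ be nonzero with μ² = 1/(ks), and let α₁,…,α_k ∈ ℂ be distinct and nonzero with α_ν^k·e^{−kα_ν} = s^k for every ν. Put γ_ν = Π_{l≠ν} α_l/(α_l − α_ν). For 0 ≤ j ≤ k define f^{(-j)}(x) = (μ·k^j)^{-1}·Σ_{ν=1}^k γ_ν·α_ν^{-j}·e^{kα_ν x} (so f = f^{(0)}). Then: (f^{(-j)})' = f^{(-(j-1))} for 1 ≤ j ≤ k, i.e. the f^{(-j)} are successive antiderivatives of f; f^{(-j)}(1) = 0 for 1 ≤ j ≤ k−1; f^{(-k)}(1) = μ^{2k−1}; f(0) = μ^{-1}; and the j-th derivative f^{(j)}(0) = 0 for 1 ≤ j ≤ k−1. -/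

import Mathlib

/-! Each `f^{(-j)}` is an exponential sum `∑ cᵥ e^{kαᵥx}`, and passing from `j` to `j + 1` divides
the coefficients by `kαᵥ`, so the `f^{(-j)}` are successive antiderivatives. At `x = 1` the
equation for `αᵥ` turns `e^{kαᵥ}` into `(αᵥ/s)^k`, and at `x = 0` the `j`-th derivative multiplies
the coefficients by `(kαᵥ)^j`; so all the boundary values reduce to the moments `∑ γᵥ αᵥ^m`,
`m < k`. Since `γᵥ` is the value at `0` of the Lagrange basis polynomial of the node `αᵥ`, and
interpolation at `k` nodes reproduces `X^m`, these moments are `0^m`. -/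

open Finset Polynomial

namespace Lagrange

variable {F ι : Type*} [Field F] [DecidableEq ι]

theorem eval_zero_basis (s : Finset ι) (v : ι → F) (i : ι) :
    (Lagrange.basis s v i).eval 0 = ∏ j ∈ s.erase i, v j / (v j - v i) := by
  rw [Lagrange.basis, eval_prod]
  refine prod_congr rfl fun j _ => ?_
  rw [basisDivisor, eval_mul, eval_C, eval_sub, eval_X, eval_C, zero_sub, ← neg_sub,
    div_eq_mul_inv, inv_neg, neg_mul_neg, mul_comm]

theorem sum_eval_basis_mul_pow {s : Finset ι} {v : ι → F} (hvs : Set.InjOn v s) {m : ℕ}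
    (hm : m < #s) (x : F) :
    ∑ i ∈ s, (Lagrange.basis s v i).eval x * v i ^ m = x ^ m := by
  have hdeg : (X ^ m : F[X]).degree < #s := by
    rw [degree_X_pow]
    exact_mod_cast hm
  conv_rhs => rw [← eval_X (x := x), ← eval_pow, eq_interpolate hvs hdeg, interpolate_apply]
  simp only [eval_finsetSum, eval_mul, eval_C, eval_pow, eval_X, mul_comm]

end Lagrange

theorem sum_prod_div_sub_mul_pow {F ι : Type*} [Field F] [Fintype ι] [DecidableEq ι]
    {α : ι → F} (hα : Function.Injective α) {m : ℕ} (hm : m < Fintype.card ι) :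
    ∑ ν, (∏ l ∈ univ.erase ν, α l / (α l - α ν)) * α ν ^ m = 0 ^ m := by
  simp only [← Lagrange.eval_zero_basis]
  exact Lagrange.sum_eval_basis_mul_pow hα.injOn hm 0

theorem Complex.exp_eq_div_mul_exp_neg {y : ℂ} (hy : y ≠ 0) (z : ℂ) :
    exp z = y / (y * exp (-z)) := by
  rw [div_mul_cancel_left₀ hy, exp_neg, inv_inv]

theorem inv_mul_pow_eq_pow_of_sq_eq_inv {K : Type*} [Field K] {μ a : K} (h : μ ^ 2 = a⁻¹)
    {n : ℕ} (hn : n ≠ 0) : (μ * a ^ n)⁻¹ = μ ^ (2 * n - 1) := by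
  rcases eq_or_ne μ 0 with rfl | hμ
  · rw [zero_mul, inv_zero, zero_pow (by omega)]
  have ha : a ≠ 0 := by
    rintro rfl
    simp [hμ] at h
  refine (eq_inv_of_mul_eq_one_left ?_).symm
  calc μ ^ (2 * n - 1) * (μ * a ^ n) = (μ ^ 2 * a) ^ n := by
        rw [← mul_assoc, ← pow_succ, Nat.sub_add_cancel (by omega), pow_mul, mul_pow]
    _ = 1 := by rw [h, inv_mul_cancel₀ ha, one_pow]

section ExpSum

variable {ι : Type*} [Fintype ι]

noncomputable def expSum (c β : ι → ℂ) (x : ℝ) : ℂ :=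
  ∑ i, c i * Complex.exp (β i * x)

theorem expSum_zero (c β : ι → ℂ) : expSum c β 0 = ∑ i, c i := by
  simp [expSum]

theorem expSum_one (c β : ι → ℂ) : expSum c β 1 = ∑ i, c i * Complex.exp (β i) := by
  simp [expSum]

theorem hasDerivAt_expSum (c β : ι → ℂ) (x : ℝ) :
    HasDerivAt (expSum c β) (expSum (c * β) β x) x := by
  unfold expSum
  refine HasDerivAt.fun_sum fun i _ => ?_
  have hlin : HasDerivAt (fun x : ℝ => β i * (x : ℂ)) (β i) x := by
    simpa using (Complex.ofRealCLM.hasDerivAt (x := x)).const_mul (β i)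
  exact (hlin.cexp.const_mul (c i)).congr_deriv (by rw [Pi.mul_apply]; ring)

theorem deriv_expSum (c β : ι → ℂ) : deriv (expSum c β) = expSum (c * β) β :=
  funext fun x => (hasDerivAt_expSum c β x).deriv

theorem iteratedDeriv_expSum (c β : ι → ℂ) (n : ℕ) :
    iteratedDeriv n (expSum c β) = expSum (c * β ^ n) β := by
  induction n with
  | zero => rw [iteratedDeriv_zero, pow_zero, mul_one]
  | succ n ih => rw [iteratedDeriv_succ, ih, deriv_expSum, pow_succ, mul_assoc]

end ExpSum

theorem explicit_solution_properties_general_general (k : ℕ) (hk : 2 ≤ k)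
    (s μ : ℂ) (hμ2 : μ ^ 2 = 1 / (k * s))
    (α : Fin k → ℂ) (hαinj : Function.Injective α) (hα0 : ∀ ν, α ν ≠ 0)
    (hα : ∀ ν, α ν ^ k * Complex.exp (-(k : ℂ) * α ν) = s ^ k)
    (γ : Fin k → ℂ)
    (hγ : ∀ ν, γ ν = ∏ l ∈ Finset.univ.erase ν, α l / (α l - α ν))
    (F : ℕ → ℝ → ℂ)
    (hF : ∀ j : ℕ, j ≤ k → ∀ x : ℝ, F j x =
      (μ * (k : ℂ) ^ j)⁻¹ *
        ∑ ν : Fin k, γ ν * (α ν ^ j)⁻¹ * Complex.exp ((k : ℂ) * α ν * (x : ℂ))) :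
    (∀ j : ℕ, 1 ≤ j → j ≤ k → ∀ x : ℝ, HasDerivAt (F j) (F (j - 1) x) x) ∧
    (∀ j : ℕ, 1 ≤ j → j ≤ k - 1 → F j 1 = 0) ∧
    F k 1 = μ ^ (2 * k - 1) ∧
    F 0 0 = μ⁻¹ ∧
    (∀ j : ℕ, 1 ≤ j → j ≤ k - 1 → iteratedDeriv j (F 0) 0 = 0) := by
  have hk0 : (k : ℂ) ≠ 0 := Nat.cast_ne_zero.mpr (by omega)
  have hweights : ∀ m < k, ∑ ν, γ ν * α ν ^ m = 0 ^ m := fun m hm => by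
    simpa only [hγ] using sum_prod_div_sub_mul_pow hαinj (m := m) (by simpa using hm)
  have hFexp : ∀ j ≤ k, F j = expSum (fun ν => (μ * k ^ j)⁻¹ * (γ ν * (α ν ^ j)⁻¹))
      (fun ν => k * α ν) := fun j hj => funext fun x => by
    simp only [hF j hj x, expSum, mul_sum, mul_assoc]
  have hexp : ∀ ν, Complex.exp (k * α ν) = α ν ^ k / s ^ k := fun ν => by
    rw [Complex.exp_eq_div_mul_exp_neg (pow_ne_zero k (hα0 ν)), ← neg_mul, hα ν]
  have hF1 : ∀ j ≤ k, F j 1 = (μ * k ^ j * s ^ k)⁻¹ * ∑ ν, γ ν * α ν ^ (k - j) := fun j hj => by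
    rw [hFexp j hj, expSum_one, mul_sum]
    refine sum_congr rfl fun ν _ => ?_
    rw [hexp, pow_sub₀ _ (hα0 ν) hj]
    field_simp
  refine ⟨fun j hj1 hjk x => ?_, fun j hj1 hjk => ?_, ?_, ?_, fun j hj1 hjk => ?_⟩
  · obtain ⟨i, rfl⟩ : ∃ i, j = i + 1 := ⟨j - 1, by omega⟩
    rw [hFexp _ hjk, hFexp _ (by omega)]
    refine (hasDerivAt_expSum _ _ x).congr_deriv (congrArg (expSum · _ x) (funext fun ν => ?_))
    have hαν := hα0 ν
    simp only [Pi.mul_apply, add_tsub_cancel_right]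
    field_simp
    ring
  · rw [hF1 j (by omega), hweights (k - j) (by omega), zero_pow (by omega), mul_zero]
  · rw [hF1 k le_rfl, Nat.sub_self, hweights 0 (by omega), pow_zero, mul_one, mul_assoc, ← mul_pow]
    exact inv_mul_pow_eq_pow_of_sq_eq_inv (by rw [hμ2, one_div]) (by omega)
  · rw [hFexp 0 (by omega), expSum_zero]
    have hsum := hweights 0 (by omega)
    simp only [pow_zero, mul_one] at hsum
    simp only [pow_zero, mul_one, inv_one, ← mul_sum, hsum]
  · rw [hFexp 0 (by omega), iteratedDeriv_expSum, expSum_zero]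
    simp only [Pi.mul_apply, Pi.pow_apply, pow_zero, mul_one, inv_one, mul_pow, mul_assoc,
      mul_left_comm (γ _), ← mul_sum, hweights j (by omega), zero_pow (by omega : j ≠ 0), mul_zero]

/-- Properties of the explicit functions `f^{(-j)}` built from the `k` branches of Lambert's
W-function (general case `k ≥ 2`): with `μ² = 1/(ks)`, `α_ν` distinct, nonzero, satisfying
`α_ν^k e^{−kα_ν} = s^k`, `γ_ν = Π_{l≠ν} α_l/(α_l − α_ν)`, and
`f^{(-j)}(x) = (μk^j)⁻¹ Σ_ν γ_ν α_ν^{-j} e^{kα_ν x}` for `0 ≤ j ≤ k`, the `f^{(-j)}` are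
successive antiderivatives of `f = f^{(0)}`, with `f^{(-j)}(1) = 0` for `1 ≤ j ≤ k−1`,
`f^{(-k)}(1) = μ^{2k−1}`, `f(0) = μ⁻¹`, and `f^{(j)}(0) = 0` for `1 ≤ j ≤ k−1`. -/
theorem explicit_solution_properties_general (k : ℕ) (hk : 2 ≤ k)
    (s μ : ℂ) (hs : s ≠ 0) (hμ : μ ≠ 0) (hμ2 : μ ^ 2 = 1 / (k * s))
    (α : Fin k → ℂ) (hαinj : Function.Injective α) (hα0 : ∀ ν, α ν ≠ 0)
    (hα : ∀ ν, α ν ^ k * Complex.exp (-(k : ℂ) * α ν) = s ^ k)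
    (γ : Fin k → ℂ)
    (hγ : ∀ ν, γ ν = ∏ l ∈ Finset.univ.erase ν, α l / (α l - α ν))
    (F : ℕ → ℝ → ℂ)
    (hF : ∀ j : ℕ, j ≤ k → ∀ x : ℝ, F j x =
      (μ * (k : ℂ) ^ j)⁻¹ *
        ∑ ν : Fin k, γ ν * (α ν ^ j)⁻¹ * Complex.exp ((k : ℂ) * α ν * (x : ℂ))) :
    (∀ j : ℕ, 1 ≤ j → j ≤ k → ∀ x : ℝ, HasDerivAt (F j) (F (j - 1) x) x) ∧
    (∀ j : ℕ, 1 ≤ j → j ≤ k - 1 → F j 1 = 0) ∧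
    F k 1 = μ ^ (2 * k - 1) ∧
    F 0 0 = μ⁻¹ ∧
    (∀ j : ℕ, 1 ≤ j → j ≤ k - 1 → iteratedDeriv j (F 0) 0 = 0) :=
  explicit_solution_properties_general_general k hk s μ hμ2 α hαinj hα0 hα γ hγ F hF
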